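/- The ideal of R = ℤ[x_1,...,x_r] ⊗ ℤ[y_1,...,y_r]^{S_r} generated by Q_{r,0},...,Q_{r,r-1}, where Q_{r,j} := e_{r-j}(Y - {x_{r-j},...,x_r}), equals the ideal generated by the differences e_i(x_1,...,x_r) - e_i(y_1,...,y_r) for i = 1,...,r. -/

import Mathlib

open MvPolynomial

/-- The elementary symmetric polynomial `e_n` in the set of variables `s`. -/
noncomputable def eOn {σ : Type} [DecidableEq σ] (s : Finset σ) (n : ℕ) : MvPolynomial σ ℤ :=
  ∑ t ∈ Finset.powersetCard n s, ∏ i ∈ t, X i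

/-- The complete homogeneous symmetric polynomial `h_n` in the set of variables `s`. -/
noncomputable def hOn {σ : Type} [DecidableEq σ] (s : Finset σ) (n : ℕ) : MvPolynomial σ ℤ :=
  ∑ m ∈ s.sym n, (m.1.map X).prod

/-- The ring `R = ℤ[x_1,…,x_r] ⊗ ℤ[y_1,…,y_r]^{S_r}`, presented as the polynomial ring in the
`x_i` (the `Sum.inl` variables) and the elementary symmetric polynomials `e_1(Y),…,e_r(Y)`
(the `Sum.inr` variables, via the fundamental theorem of symmetric polynomials).
`Evar r n` is the element corresponding to `e_n(Y)` (with `e_0(Y) = 1`). -/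
noncomputable def Evar (r n : ℕ) : MvPolynomial (Fin r ⊕ Fin r) ℤ :=
  if _h0 : n = 0 then 1 else if h : n ≤ r then X (Sum.inr ⟨n - 1, by omega⟩) else 0

/-- `QE r j` corresponds to `Q_{r,j} = e_{r-j}(Y - {x_{r-j},…,x_r})
= Σ_i (-1)^i e_{r-j-i}(Y) h_i(x_{r-j},…,x_r)`. -/
noncomputable def QE (r j : ℕ) : MvPolynomial (Fin r ⊕ Fin r) ℤ :=
  ∑ i ∈ Finset.range (r - j + 1),
    (-1) ^ i * Evar r (r - j - i) *
      hOn ((Finset.univ.filter fun t : Fin r => r - j - 1 ≤ (t : ℕ)).image Sum.inl) i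

/-! With `E(T) = ∑ e_n(Y) Tⁿ`, `P_s(T) = ∏_{x ∈ s} (1 + x T)` and
`H_s(T) = 1 / P_s(T) = ∑ (-1)ⁿ h_n(s) Tⁿ`, put `G = E · H_X` and let `F_n` be its coefficients.
For `S = {x_{r-j},…,x_r}` and `A = X \ S` we have `H_S = H_X · P_A`, so `Q_{r,j}`, the coefficient
of `T^{r-j}` in `E · H_S = G · P_A`, is `F_{r-j}` plus a combination of lower `F_k` (the term
`F_0 e_{r-j}(A)` vanishes because `|A| = r-j-1`). Likewise `E - P_X = (G - 1) · P_X` writes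
`e_m(Y) - e_m(X)` as `F_m` plus a combination of lower `F_k`. Both families are thus unitriangular
in `F_1, …, F_r`, so they generate the same ideal. -/

open Finset

theorem PowerSeries.one_add_C_mul_X_mul_rescale_neg_mk_one {R : Type*} [CommRing R] (x : R) :
    (1 + C x * X) * rescale (-x) (mk 1) = 1 := by
  have h := congrArg (rescale (-x)) (mk_one_mul_one_sub_eq_one R)
  rwa [map_mul, map_sub, map_one, rescale_X, map_neg, neg_mul, sub_neg_eq_add, mul_comm] at h

theorem Ideal.span_image_eq_of_unitriangular {A : Type*} [CommRing A] {u v : ℕ → A} {r : ℕ}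
    (h : ∀ i < r, ∃ c : Aˣ, v i - c * u i ∈ span (u '' {k | k < i})) :
    span (v '' {i | i < r}) = span (u '' {i | i < r}) := by
  have lower_le {i : ℕ} (hi : i ≤ r) : span (u '' {k | k < i}) ≤ span (u '' {i | i < r}) :=
    span_mono <| Set.image_mono fun k (hk : k < i) => lt_of_lt_of_le hk hi
  apply le_antisymm <;> rw [span_le]
  · rintro _ ⟨i, hi, rfl⟩
    obtain ⟨c, hc⟩ := h i hi
    rw [← sub_add_cancel (v i) (c * u i)]
    exact add_mem (lower_le hi.le hc) (mul_mem_left _ _ (subset_span ⟨i, hi, rfl⟩))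
  · suffices ∀ i < r, u i ∈ span (v '' {i | i < r}) by
      rintro _ ⟨i, hi, rfl⟩
      exact this i hi
    intro i
    induction i using Nat.strong_induction_on with
    | _ i ih =>
      intro hi
      obtain ⟨c, hc⟩ := h i hi
      have hlower : span (u '' {k | k < i}) ≤ span (v '' {i | i < r}) := by
        rw [span_le]
        rintro _ ⟨k, hk, rfl⟩
        exact ih k hk (hk.trans hi)
      have hu : u i = ↑c⁻¹ * (v i - (v i - c * u i)) := by
        rw [sub_sub_cancel, ← mul_assoc, Units.inv_mul, one_mul]
      rw [hu]
      exact mul_mem_left _ _ (sub_mem (subset_span ⟨i, hi, rfl⟩) (hlower hc))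

theorem image_reflect_setOf_lt {α : Type*} (f : ℕ → α) (r : ℕ) :
    (fun i => f (r - 1 - i)) '' {i | i < r} = f '' {j | j < r} := by
  ext x
  constructor
  · rintro ⟨i, hi : i < r, rfl⟩
    exact ⟨r - 1 - i, show r - 1 - i < r by omega, rfl⟩
  · rintro ⟨j, hj : j < r, rfl⟩
    exact ⟨r - 1 - j, show r - 1 - j < r by omega, congrArg f (by omega)⟩

section GeneratingSeries

variable {σ : Type} [DecidableEq σ]

noncomputable def eSeries (s : Finset σ) : PowerSeries (MvPolynomial σ ℤ) :=
  ∏ i ∈ s, (1 + PowerSeries.C (X i) * PowerSeries.X)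

noncomputable def hSeries (s : Finset σ) : PowerSeries (MvPolynomial σ ℤ) :=
  PowerSeries.mk fun n => (-1) ^ n * hOn s n

theorem eOn_zero (s : Finset σ) : eOn s 0 = 1 := by
  simp [eOn]

theorem eOn_eq_zero {s : Finset σ} {n : ℕ} (h : s.card < n) : eOn s n = 0 := by
  rw [eOn, powersetCard_eq_empty.2 h, sum_empty]

theorem hOn_zero (s : Finset σ) : hOn s 0 = 1 := by
  simp [hOn, Sym.eq_nil_of_card_zero]

theorem coeff_eSeries (s : Finset σ) (n : ℕ) : PowerSeries.coeff n (eSeries s) = eOn s n := by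
  have expand :
      eSeries s = ∑ t ∈ s.powerset, PowerSeries.C (∏ i ∈ t, X i) * PowerSeries.X ^ t.card := by
    rw [eSeries, prod_congr rfl fun i _ => add_comm _ _, prod_add]
    simp only [prod_const_one, mul_one, prod_mul_distrib, map_prod, prod_const]
  rw [expand, map_sum, eOn, powersetCard_eq_filter, sum_filter]
  simp only [PowerSeries.coeff_C_mul_X_pow, @eq_comm _ n]

theorem hOn_insert {a : σ} {s : Finset σ} (h : a ∉ s) (n : ℕ) :
    hOn (insert a s) n = ∑ k ∈ range (n + 1), X a ^ k * hOn s (n - k) := by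
  rw [hOn, ← sum_coe_sort, ← (symInsertEquiv h).symm.sum_comp, Fintype.sum_sigma,
    ← Fin.sum_univ_eq_sum_range]
  refine Fintype.sum_congr _ _ fun k => ?_
  simp [symInsertEquiv, Sym.coe_fill, hOn, mul_sum, mul_comm, ← sum_coe_sort (s.sym _),
    Sym.coe_replicate, Multiset.map_replicate]

theorem hSeries_insert {a : σ} {s : Finset σ} (h : a ∉ s) :
    hSeries (insert a s) = PowerSeries.rescale (-X a) (PowerSeries.mk 1) * hSeries s := by
  ext1 n
  rw [PowerSeries.coeff_mul, Nat.sum_antidiagonal_eq_sum_range_succ_mk, hSeries,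
    PowerSeries.coeff_mk, hOn_insert h, mul_sum]
  refine sum_congr rfl fun k hk => ?_
  obtain ⟨l, rfl⟩ := Nat.exists_eq_add_of_le (Nat.lt_succ_iff.1 (mem_range.1 hk))
  rw [add_tsub_cancel_left, PowerSeries.coeff_rescale, PowerSeries.coeff_mk, hSeries,
    PowerSeries.coeff_mk, Pi.one_apply, neg_pow, pow_add]
  ring

theorem eSeries_mul_hSeries (s : Finset σ) : eSeries s * hSeries s = 1 := by
  induction s using Finset.induction with
  | empty =>
    ext1 n
    cases n with
    | zero => simp [eSeries, hSeries, hOn_zero]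
    | succ n => simp [eSeries, hSeries, hOn, PowerSeries.coeff_one]
  | insert a s ha ih =>
    rw [eSeries, prod_insert ha, hSeries_insert ha, ← eSeries, mul_mul_mul_comm,
      PowerSeries.one_add_C_mul_X_mul_rescale_neg_mk_one, ih, one_mul]

theorem hSeries_eq_hSeries_union_mul_eSeries {s t : Finset σ} (h : Disjoint s t) :
    hSeries s = hSeries (s ∪ t) * eSeries t :=
  left_inv_eq_right_inv (by rw [mul_comm, eSeries_mul_hSeries]) <| by
    rw [← mul_assoc, ← eSeries_mul_hSeries (s ∪ t), eSeries, eSeries, eSeries, prod_union h,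
      mul_right_comm]

theorem coeff_succ_mul_eSeries_sub_mem (G : PowerSeries (MvPolynomial σ ℤ)) (t : Finset σ)
    (n : ℕ)
    (h0 : PowerSeries.coeff 0 G * eOn t (n + 1) = 0) :
    PowerSeries.coeff (n + 1) (G * eSeries t) - PowerSeries.coeff (n + 1) G
      ∈ Ideal.span ((fun k => PowerSeries.coeff (k + 1) G) '' {k | k < n}) := by
  rw [PowerSeries.coeff_mul, Nat.sum_antidiagonal_eq_sum_range_succ_mk, sum_range_succ',
    sum_range_succ]
  simp only [coeff_eSeries, Nat.sub_zero, Nat.sub_self, eOn_zero, mul_one, h0, add_zero,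
    add_sub_cancel_right]
  exact Ideal.sum_mem _ fun k hk =>
    Ideal.mul_mem_right _ _ (Ideal.subset_span ⟨k, mem_range.1 hk, rfl⟩)

end GeneratingSeries

section Main

variable (r : ℕ)

/-- `xFrom r i = {x_{i+1}, …, x_r}` in the paper's 1-based numbering of the variables. -/
noncomputable def xFrom (i : ℕ) : Finset (Fin r ⊕ Fin r) :=
  (univ.filter fun t : Fin r => i ≤ (t : ℕ)).image Sum.inl

noncomputable def xBelow (i : ℕ) : Finset (Fin r ⊕ Fin r) :=
  (univ.filter fun t : Fin r => (t : ℕ) < i).image Sum.inl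

noncomputable def eYSeries : PowerSeries (MvPolynomial (Fin r ⊕ Fin r) ℤ) :=
  PowerSeries.mk (Evar r)

noncomputable def gSeries : PowerSeries (MvPolynomial (Fin r ⊕ Fin r) ℤ) :=
  eYSeries r * hSeries (univ.image Sum.inl)

theorem card_xBelow {i : ℕ} (hi : i ≤ r) : (xBelow r i).card = i := by
  rw [xBelow, card_image_of_injective _ Sum.inl_injective, Fin.card_filter_val_lt,
    min_eq_right hi]

theorem hSeries_xFrom (i : ℕ) :
    hSeries (xFrom r i) = hSeries (univ.image Sum.inl) * eSeries (xBelow r i) := by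
  have hdisj : Disjoint (xFrom r i) (xBelow r i) := by
    rw [xFrom, xBelow, disjoint_image Sum.inl_injective]
    exact disjoint_filter.2 fun t _ h1 h2 => by omega
  have hunion : xFrom r i ∪ xBelow r i = univ.image Sum.inl := by
    rw [xFrom, xBelow, ← image_union, filter_union_right]
    exact congrArg _ (filter_true_of_mem fun t _ => le_or_gt i t)
  rw [hSeries_eq_hSeries_union_mul_eSeries hdisj, hunion]

theorem coeff_zero_gSeries : PowerSeries.coeff 0 (gSeries r) = 1 := by
  simp [gSeries, eYSeries, hSeries, Evar, hOn_zero]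

theorem QE_eq_coeff (j : ℕ) :
    QE r j = PowerSeries.coeff (r - j) (hSeries (xFrom r (r - j - 1)) * eYSeries r) := by
  rw [PowerSeries.coeff_mul, Nat.sum_antidiagonal_eq_sum_range_succ_mk, QE]
  refine sum_congr rfl fun k _ => ?_
  simp only [hSeries, eYSeries, xFrom, PowerSeries.coeff_mk]
  ring

theorem QE_sub_coeff_gSeries_mem {i : ℕ} (hi : i < r) :
    QE r (r - 1 - i) - PowerSeries.coeff (i + 1) (gSeries r)
      ∈ Ideal.span ((fun k => PowerSeries.coeff (k + 1) (gSeries r)) '' {k | k < i}) := by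
  have hQ : QE r (r - 1 - i) = PowerSeries.coeff (i + 1) (gSeries r * eSeries (xBelow r i)) := by
    rw [QE_eq_coeff, show r - (r - 1 - i) = i + 1 by omega, Nat.add_sub_cancel, hSeries_xFrom,
      gSeries, mul_right_comm, mul_comm (hSeries _)]
  rw [hQ]
  refine coeff_succ_mul_eSeries_sub_mem _ _ _ ?_
  rw [eOn_eq_zero (by rw [card_xBelow r hi.le]; omega), mul_zero]

theorem esymm_sub_add_coeff_gSeries_mem (i : ℕ) :
    eOn (univ.image Sum.inl) (i + 1) - Evar r (i + 1) + PowerSeries.coeff (i + 1) (gSeries r)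
      ∈ Ideal.span ((fun k => PowerSeries.coeff (k + 1) (gSeries r)) '' {k | k < i}) := by
  have hdiff : eYSeries r - eSeries (univ.image Sum.inl)
      = (gSeries r - 1) * eSeries (univ.image Sum.inl) := by
    rw [sub_mul, gSeries, mul_assoc, mul_comm (hSeries _), eSeries_mul_hSeries, mul_one, one_mul]
  have key := coeff_succ_mul_eSeries_sub_mem (gSeries r - 1) (univ.image Sum.inl) i (by
    rw [map_sub, coeff_zero_gSeries, PowerSeries.coeff_zero_one, sub_self, zero_mul])
  simp only [← hdiff, map_sub, PowerSeries.coeff_one, if_neg (Nat.succ_ne_zero _), sub_zero,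
    eYSeries, PowerSeries.coeff_mk, coeff_eSeries] at key
  convert neg_mem key using 1
  ring

end Main

/-- The ideal of `R = ℤ[x_1,…,x_r] ⊗ ℤ[y_1,…,y_r]^{S_r}` generated by `Q_{r,0},…,Q_{r,r-1}`
equals the ideal generated by the differences `e_i(X) - e_i(Y)` for `i = 1,…,r`. -/
theorem span_QE_eq_span_esymm_sub (r : ℕ) :
    Ideal.span ((fun j => QE r j) '' {j | j < r})
      = Ideal.span
          ((fun i => eOn (Finset.univ.image Sum.inl) (i + 1) - Evar r (i + 1)) '' {i | i < r}) := by
  rw [← image_reflect_setOf_lt,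
    Ideal.span_image_eq_of_unitriangular (v := fun i => QE r (r - 1 - i)) fun i hi =>
      ⟨1, by simpa using QE_sub_coeff_gSeries_mem r hi⟩,
    Ideal.span_image_eq_of_unitriangular
      (v := fun i => eOn (univ.image Sum.inl) (i + 1) - Evar r (i + 1)) fun i _ =>
      ⟨-1, by simpa [sub_eq_add_neg] using esymm_sub_add_coeff_gSeries_mem r i⟩]
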